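/- Let m, n ≥ 1 and let c : Fin m × Fin n → ℝ be an arbitrary cost function. Then there exists a coupling γ of the uniform measures (a matrix γ : Fin m → Fin n → ℝ with γ(i,j) ≥ 0 for all i,j, ∑_j γ(i,j) = 1/m for every i, and ∑_i γ(i,j) = 1/n for every j) such that γ minimizes the Kantorovich cost ∑_{i,j} c(i,j) γ(i,j) among all such couplings and every entry of γ is an integer multiple of gcd(m,n)/(m·n), i.e., for every (i,j) there exists a natural number k with γ(i,j) = k · gcd(m,n)/(m·n). -/

import Mathlib

/-!
Let `L = lcm(m, n)` and blow the `m` points up into `L / m` copies each and the `n` points into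
`L / n` copies each, i.e. pick maps `π : Fin L → Fin m`, `ρ : Fin L → Fin n` with fibres of
constant size. Every coupling pulls back to an `L × L` doubly stochastic matrix whose cost is `L`
times its own, and every doubly stochastic matrix pushes forward to a coupling whose cost is `1 / L`
times its own. By Birkhoff's theorem the linear cost attains its minimum over the doubly stochastic
matrices at a permutation matrix; its push-forward is therefore an optimal coupling, and its entries
count points of `Fin L`, divided by `L = m * n / gcd(m, n)`.
-/

open Finset

variable {ι α β : Type*} [Fintype ι]

def kantorovichCost [Fintype α] [Fintype β] (c : α × β → ℝ) (γ : α → β → ℝ) : ℝ :=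
  ∑ i, ∑ j, c (i, j) * γ i j

def IsUniformCoupling [Fintype α] [Fintype β] (γ : α → β → ℝ) : Prop :=
  (∀ i j, 0 ≤ γ i j) ∧ (∀ i, ∑ j, γ i j = 1 / Fintype.card α) ∧
    ∀ j, ∑ i, γ i j = 1 / Fintype.card β

theorem isLinearMap_kantorovichCost [Fintype α] [Fintype β] (c : α × β → ℝ) :
    IsLinearMap ℝ (kantorovichCost c) where
  map_add γ γ' := by simp only [kantorovichCost, Pi.add_apply, mul_add, sum_add_distrib]
  map_smul r γ := by
    simp only [kantorovichCost, Pi.smul_apply, smul_eq_mul, mul_sum, mul_left_comm]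

theorem exists_perm_kantorovichCost_permMatrix_le [DecidableEq ι] (C : ι × ι → ℝ) :
    ∃ σ : Equiv.Perm ι, ∀ M ∈ doublyStochastic ℝ ι,
      kantorovichCost C (σ.permMatrix ℝ) ≤ kantorovichCost C M := by
  obtain ⟨σ, hσ⟩ := Finite.exists_min fun τ : Equiv.Perm ι => kantorovichCost C (τ.permMatrix ℝ)
  refine ⟨σ, fun M hM => ?_⟩
  rw [← SetLike.mem_coe, doublyStochastic_eq_convexHull_permMatrix] at hM
  refine convexHull_min ?_ (convex_halfSpace_ge (isLinearMap_kantorovichCost C) _) hM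
  rintro _ ⟨τ, rfl⟩
  exact hσ τ

section Fibers

variable [DecidableEq α] {π : ι → α} {p : ℕ}

theorem sum_comp_eq_mul_sum_of_card_fiber {R : Type*} [Semiring R] [Fintype α]
    (hπ : ∀ i, #{a | π a = i} = p) (f : α → R) : ∑ a, f (π a) = p * ∑ i, f i := by
  rw [← sum_fiberwise' univ π f, mul_sum]
  simp [hπ]

theorem card_eq_mul_card_of_card_fiber [Fintype α] (hπ : ∀ i, #{a | π a = i} = p) :
    Fintype.card ι = p * Fintype.card α := by
  rw [← card_univ, card_eq_sum_card_fiberwise fun a _ => mem_univ (π a)]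
  simp [hπ, mul_comm]

theorem card_fiber_div_card [Fintype α] [Nonempty ι] (hπ : ∀ i, #{a | π a = i} = p) :
    (p : ℝ) / Fintype.card ι = 1 / Fintype.card α := by
  have hcard := card_eq_mul_card_of_card_fiber hπ
  have hp : (p : ℝ) ≠ 0 := by
    have := hcard ▸ Fintype.card_ne_zero (α := ι)
    exact_mod_cast left_ne_zero_of_mul this
  rw [hcard, Nat.cast_mul, div_mul_cancel_left₀ hp, one_div]

theorem card_fiber_fst_comp_equiv {κ : Type*} [Fintype κ] (e : ι ≃ α × κ) (i : α) :
    #{a | (e a).1 = i} = Fintype.card κ := by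
  rw [← Fintype.card_subtype]
  exact Fintype.card_congr ((e.subtypeEquiv (p := fun a => (e a).1 = i) (q := fun x => x.1 = i)
    fun _ => Iff.rfl).trans (Equiv.prodSubtypeFstEquivSubtypeProd.trans
      (Equiv.uniqueProd κ {a // a = i})))

end Fibers

theorem Fin.exists_card_fiber_eq {L m : ℕ} (h : m ∣ L) :
    ∃ π : Fin L → Fin m, ∀ i, #{a | π a = i} = L / m :=
  let e := (finCongr (Nat.mul_div_cancel' h).symm).trans finProdFinEquiv.symm
  ⟨fun a => (e a).1, fun i => by simpa using card_fiber_fst_comp_equiv e i⟩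

section Transfer

variable [DecidableEq α] [DecidableEq β] (π : ι → α) (ρ : ι → β)

noncomputable def pushMatrix (M : Matrix ι ι ℝ) (i : α) (j : β) : ℝ :=
  (∑ a with π a = i, ∑ b with ρ b = j, M a b) / Fintype.card ι

/-- The factor `card α * card β / card ι` makes the row and column sums `1` when the fibres of `π`
and `ρ` have `card ι / card α` and `card ι / card β` points. -/
noncomputable def pullCoupling [Fintype α] [Fintype β] (γ : α → β → ℝ) : Matrix ι ι ℝ :=
  fun a b => Fintype.card α * Fintype.card β / Fintype.card ι * γ (π a) (ρ b)

theorem kantorovichCost_pushMatrix [Fintype α] [Fintype β] (c : α × β → ℝ) (M : Matrix ι ι ℝ) :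
    kantorovichCost c (pushMatrix π ρ M) =
      kantorovichCost (fun x => c (π x.1, ρ x.2)) M / Fintype.card ι := by
  simp only [kantorovichCost, pushMatrix, mul_div_assoc', ← sum_div, mul_sum]
  congr 1
  calc ∑ i, ∑ j, ∑ a with π a = i, ∑ b with ρ b = j, c (i, j) * M a b
      = ∑ i, ∑ a with π a = i, ∑ j, ∑ b with ρ b = j, c (π a, ρ b) * M a b := by
        refine sum_congr rfl fun i _ => ?_
        rw [sum_comm]
        refine sum_congr rfl fun a ha => sum_congr rfl fun j _ => sum_congr rfl fun b hb => ?_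
        rw [(mem_filter.1 ha).2, (mem_filter.1 hb).2]
    _ = ∑ a, ∑ b, c (π a, ρ b) * M a b := by
        rw [sum_fiberwise]
        exact sum_congr rfl fun a _ => sum_fiberwise _ _ _

theorem pushMatrix_permMatrix_apply [DecidableEq ι] (σ : Equiv.Perm ι) (i : α) (j : β) :
    pushMatrix π ρ (σ.permMatrix ℝ) i j = #{a | π a = i ∧ ρ (σ a) = j} / Fintype.card ι := by
  simp [pushMatrix, PEquiv.toMatrix_apply, filter_filter]

variable {π ρ} {p q : ℕ} [Fintype α] [Fintype β]

theorem isUniformCoupling_pushMatrix [DecidableEq ι] [Nonempty ι]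
    (hπ : ∀ i, #{a | π a = i} = p) (hρ : ∀ j, #{b | ρ b = j} = q) {M : Matrix ι ι ℝ}
    (hM : M ∈ doublyStochastic ℝ ι) : IsUniformCoupling (pushMatrix π ρ M) := by
  obtain ⟨hM0, hrow, hcol⟩ := mem_doublyStochastic_iff_sum.1 hM
  refine ⟨fun i j => div_nonneg (sum_nonneg fun a _ => sum_nonneg fun b _ => hM0 a b)
    (Nat.cast_nonneg _), fun i => ?_, fun j => ?_⟩
  · simp only [pushMatrix, ← sum_div]
    rw [sum_comm, sum_congr rfl fun a _ => sum_fiberwise univ ρ (M a)]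
    simpa [hrow, hπ] using card_fiber_div_card hπ
  · simp only [pushMatrix, ← sum_div]
    rw [sum_fiberwise univ π, sum_comm (f := fun a b => M a b)]
    simpa [hcol, hρ] using card_fiber_div_card hρ

theorem pullCoupling_mem_doublyStochastic [DecidableEq ι] [Nonempty ι]
    (hπ : ∀ i, #{a | π a = i} = p) (hρ : ∀ j, #{b | ρ b = j} = q) {γ : α → β → ℝ}
    (hγ : IsUniformCoupling γ) : pullCoupling π ρ γ ∈ doublyStochastic ℝ ι := by
  obtain ⟨hγ0, hrow, hcol⟩ := hγ
  have : Nonempty α := .map π ‹_›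
  have : Nonempty β := .map ρ ‹_›
  have hα : (Fintype.card α : ℝ) ≠ 0 := by positivity
  have hβ : (Fintype.card β : ℝ) ≠ 0 := by positivity
  refine mem_doublyStochastic_iff_sum.2 ⟨fun a b => mul_nonneg (by positivity) (hγ0 _ _),
    fun a => ?_, fun b => ?_⟩
  · simp only [pullCoupling]
    rw [← mul_sum, sum_comp_eq_mul_sum_of_card_fiber hρ (γ (π a)), hrow]
    calc _ = (Fintype.card α : ℝ) * (1 / Fintype.card α) *
          (Fintype.card β * (q / Fintype.card ι)) := by ring
      _ = 1 := by rw [card_fiber_div_card hρ]; field_simp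
  · simp only [pullCoupling]
    rw [← mul_sum, sum_comp_eq_mul_sum_of_card_fiber hπ (fun i => γ i (ρ b)), hcol]
    calc _ = (Fintype.card β : ℝ) * (1 / Fintype.card β) *
          (Fintype.card α * (p / Fintype.card ι)) := by ring
      _ = 1 := by rw [card_fiber_div_card hπ]; field_simp

theorem kantorovichCost_pullCoupling (hπ : ∀ i, #{a | π a = i} = p)
    (hρ : ∀ j, #{b | ρ b = j} = q) (c : α × β → ℝ) (γ : α → β → ℝ) :
    kantorovichCost (fun x => c (π x.1, ρ x.2)) (pullCoupling π ρ γ) =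
      Fintype.card ι * kantorovichCost c γ := by
  have hfibers : (Fintype.card α * Fintype.card β / Fintype.card ι : ℝ) * (p * q) =
      Fintype.card ι := by
    calc _ = ((p * Fintype.card α : ℕ) : ℝ) * ((q * Fintype.card β : ℕ) : ℝ) /
          Fintype.card ι := by push_cast; ring
      _ = Fintype.card ι := by
          rw [← card_eq_mul_card_of_card_fiber hπ, ← card_eq_mul_card_of_card_fiber hρ,
            mul_self_div_self]
  have hfiber (i : α) : ∑ b, c (i, ρ b) * γ i (ρ b) = q * ∑ j, c (i, j) * γ i j :=
    sum_comp_eq_mul_sum_of_card_fiber hρ fun j => c (i, j) * γ i j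
  simp only [kantorovichCost, pullCoupling, mul_left_comm (c _), ← mul_sum, hfiber]
  rw [sum_comp_eq_mul_sum_of_card_fiber hπ fun i => ∑ j, c (i, j) * γ i j]
  linear_combination (∑ i, ∑ j, c (i, j) * γ i j) * hfibers

theorem exists_perm_isOptimal_pushMatrix_permMatrix [DecidableEq ι] [Nonempty ι]
    (hπ : ∀ i, #{a | π a = i} = p) (hρ : ∀ j, #{b | ρ b = j} = q) (c : α × β → ℝ) :
    ∃ σ : Equiv.Perm ι, IsUniformCoupling (pushMatrix π ρ (σ.permMatrix ℝ)) ∧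
      ∀ γ, IsUniformCoupling γ →
        kantorovichCost c (pushMatrix π ρ (σ.permMatrix ℝ)) ≤ kantorovichCost c γ := by
  obtain ⟨σ, hσ⟩ := exists_perm_kantorovichCost_permMatrix_le fun x => c (π x.1, ρ x.2)
  refine ⟨σ, isUniformCoupling_pushMatrix hπ hρ permMatrix_mem_doublyStochastic, fun γ hγ => ?_⟩
  have hpull := hσ _ (pullCoupling_mem_doublyStochastic hπ hρ hγ)
  rw [kantorovichCost_pullCoupling hπ hρ] at hpull
  rw [kantorovichCost_pushMatrix, div_le_iff₀' (by positivity)]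
  exact hpull

end Transfer

/-- There is an optimal coupling of the uniform measures on `m` and `n` points
all of whose entries are integer multiples of `gcd(m,n) / (m * n)`. -/
theorem kantorovich_quantized_solution
    (m n : ℕ) (hm : 1 ≤ m) (hn : 1 ≤ n) (c : Fin m × Fin n → ℝ) :
    ∃ γ : Fin m → Fin n → ℝ,
      (∀ i j, 0 ≤ γ i j) ∧
      (∀ i, ∑ j, γ i j = 1 / m) ∧
      (∀ j, ∑ i, γ i j = 1 / n) ∧
      (∀ γ' : Fin m → Fin n → ℝ,
        (∀ i j, 0 ≤ γ' i j) →
        (∀ i, ∑ j, γ' i j = 1 / m) →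
        (∀ j, ∑ i, γ' i j = 1 / n) →
        ∑ i, ∑ j, c (i, j) * γ i j ≤ ∑ i, ∑ j, c (i, j) * γ' i j) ∧
      (∀ i j, ∃ k : ℕ, γ i j = (k : ℝ) * (Nat.gcd m n : ℝ) / ((m : ℝ) * n)) := by
  have : Nonempty (Fin (m.lcm n)) := ⟨⟨0, Nat.lcm_pos hm hn⟩⟩
  obtain ⟨π, hπ⟩ := Fin.exists_card_fiber_eq (Nat.dvd_lcm_left m n)
  obtain ⟨ρ, hρ⟩ := Fin.exists_card_fiber_eq (Nat.dvd_lcm_right m n)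
  obtain ⟨σ, ⟨hγ0, hrow, hcol⟩, hopt⟩ := exists_perm_isOptimal_pushMatrix_permMatrix hπ hρ c
  simp only [Fintype.card_fin] at hrow hcol
  refine ⟨_, hγ0, hrow, hcol, fun γ' h0 h1 h2 => hopt γ' ⟨h0, by simpa using h1, by simpa using h2⟩,
    fun i j => ⟨#{a | π a = i ∧ ρ (σ a) = j}, ?_⟩⟩
  have hgcd_lcm : (m.gcd n : ℝ) * m.lcm n = m * n := by exact_mod_cast Nat.gcd_mul_lcm m n
  rw [pushMatrix_permMatrix_apply, Fintype.card_fin, ← hgcd_lcm]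
  field_simp
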